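/- arXiv:1903.09886 — 5 statements merged into one kernel-verified Lean document; each statement's English description precedes it below -/
import Mathlib

section
/- If p is Lipschitz with ‖ṗ‖_∞ ≤ M on [0,T], then for all 0 ≤ s < t ≤ T the partial derivatives of the average velocity v(s,t) = (1/(t-s)) ∫_s^t p dτ satisfy |∂v/∂s| ≤ M/2 and |∂v/∂t| ≤ M/2. -/
/-!
Both partial derivatives are `(t - s)⁻²` times the integral of an increment of `p` measured
from an endpoint: `∫ₛᵗ (p τ - p s)` and `∫ₛᵗ (p t - p τ)`. The Lipschitz bound makes the
increment at most `M` times the distance to that endpoint, which integrates to `M (t - s)² / 2`.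
-/

open MeasureTheory Set

section AverageVelocity

variable {f : ℝ → ℝ} {a b M : ℝ}

theorem integral_const_mul_sub_left :
    ∫ τ in a..b, M * (τ - a) = M * (b - a) ^ 2 / 2 := by
  simp only [intervalIntegral.integral_const_mul, intervalIntegral.integral_sub,
    intervalIntegral.integral_const, intervalIntegral.intervalIntegrable_id,
    intervalIntegrable_const, integral_id, smul_eq_mul]
  ring

theorem integral_const_mul_sub_right :
    ∫ τ in a..b, M * (b - τ) = M * (b - a) ^ 2 / 2 := by
  rw [intervalIntegral.integral_const_mul, intervalIntegral.integral_sub intervalIntegrable_const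
    intervalIntegral.intervalIntegrable_id, intervalIntegral.integral_const, integral_id,
    smul_eq_mul]
  ring

theorem abs_integral_sub_left_le (hab : a ≤ b) (hf : IntervalIntegrable f volume a b)
    (hM : ∀ τ ∈ Icc a b, |f τ - f a| ≤ M * (τ - a)) :
    |∫ τ in a..b, f τ - f a| ≤ M * (b - a) ^ 2 / 2 :=
  calc |∫ τ in a..b, f τ - f a|
      ≤ ∫ τ in a..b, |f τ - f a| := intervalIntegral.abs_integral_le_integral_abs hab
    _ ≤ ∫ τ in a..b, M * (τ - a) :=
        intervalIntegral.integral_mono_on hab (hf.sub intervalIntegrable_const).abs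
          ((by fun_prop : Continuous fun τ => M * (τ - a)).intervalIntegrable _ _) hM
    _ = M * (b - a) ^ 2 / 2 := integral_const_mul_sub_left

theorem abs_integral_sub_right_le (hab : a ≤ b) (hf : IntervalIntegrable f volume a b)
    (hM : ∀ τ ∈ Icc a b, |f b - f τ| ≤ M * (b - τ)) :
    |∫ τ in a..b, f b - f τ| ≤ M * (b - a) ^ 2 / 2 :=
  calc |∫ τ in a..b, f b - f τ|
      ≤ ∫ τ in a..b, |f b - f τ| := intervalIntegral.abs_integral_le_integral_abs hab
    _ ≤ ∫ τ in a..b, M * (b - τ) :=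
        intervalIntegral.integral_mono_on hab (intervalIntegrable_const.sub hf).abs
          ((by fun_prop : Continuous fun τ => M * (b - τ)).intervalIntegrable _ _) hM
    _ = M * (b - a) ^ 2 / 2 := integral_const_mul_sub_right

theorem abs_div_sq_le_half_of_abs_le {x d : ℝ} (hd : d ≠ 0) (hx : |x| ≤ M * d ^ 2 / 2) :
    |x / d ^ 2| ≤ M / 2 := by
  rw [abs_div, abs_of_nonneg (sq_nonneg d), div_le_iff₀ (by positivity)]
  linarith

theorem abs_average_sub_left_div_le (hab : a < b) (hf : IntervalIntegrable f volume a b)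
    (hM : ∀ τ ∈ Icc a b, |f τ - f a| ≤ M * (τ - a)) :
    |((b - a)⁻¹ * ∫ τ in a..b, f τ - f a) / (b - a)| ≤ M / 2 := by
  rw [inv_mul_eq_div, div_div, ← sq]
  exact abs_div_sq_le_half_of_abs_le (sub_ne_zero.2 hab.ne')
    (abs_integral_sub_left_le hab.le hf hM)

theorem abs_sub_average_div_le (hab : a < b) (hf : IntervalIntegrable f volume a b)
    (hM : ∀ τ ∈ Icc a b, |f b - f τ| ≤ M * (b - τ)) :
    |(f b - (b - a)⁻¹ * ∫ τ in a..b, f τ) / (b - a)| ≤ M / 2 := by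
  have hd : b - a ≠ 0 := sub_ne_zero.2 hab.ne'
  have : f b - (b - a)⁻¹ * ∫ τ in a..b, f τ = (∫ τ in a..b, f b - f τ) / (b - a) := by
    rw [intervalIntegral.integral_sub intervalIntegrable_const hf, intervalIntegral.integral_const,
      smul_eq_mul]
    field_simp
  rw [this, div_div, ← sq]
  exact abs_div_sq_le_half_of_abs_le hd (abs_integral_sub_right_le hab.le hf hM)

end AverageVelocity

theorem stmt_2_general (T M : ℝ) (p : ℝ → ℝ)
    (hLip : ∀ t ∈ Set.Icc (0:ℝ) T, ∀ τ ∈ Set.Icc (0:ℝ) T, |p t - p τ| ≤ M * |t - τ|)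
    (hint : ∀ s t : ℝ, IntervalIntegrable p volume s t) :
    ∀ s t : ℝ, 0 ≤ s → s < t → t ≤ T →
      |((t - s)⁻¹ * ∫ τ in s..t, p τ - p s) / (t - s)| ≤ M / 2 ∧
      |(p t - (t - s)⁻¹ * ∫ τ in s..t, p τ) / (t - s)| ≤ M / 2 := by
  intro s t hs hst htT
  have hsub : Icc s t ⊆ Icc 0 T := Icc_subset_Icc hs htT
  have hsI : s ∈ Icc 0 T := hsub (left_mem_Icc.2 hst.le)
  have htI : t ∈ Icc 0 T := hsub (right_mem_Icc.2 hst.le)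
  refine ⟨abs_average_sub_left_div_le hst (hint s t) fun τ hτ => ?_,
    abs_sub_average_div_le hst (hint s t) fun τ hτ => ?_⟩
  · simpa [abs_of_nonneg (sub_nonneg.2 hτ.1)] using hLip τ (hsub hτ) s hsI
  · simpa [abs_of_nonneg (sub_nonneg.2 hτ.2)] using hLip t htI τ (hsub hτ)

/-- if `p` is Lipschitz with constant `M` on `[0,T]`, then the partial
derivatives `∂v/∂s = (v(s,t) - p s)/(t-s)` and `∂v/∂t = (p t - v(s,t))/(t-s)` of the
average velocity `v(s,t) = (1/(t-s)) ∫_s^t p` are bounded by `M/2`. -/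
theorem stmt_2 (T M : ℝ) (hT : 0 < T) (p : ℝ → ℝ)
    (hLip : ∀ t ∈ Set.Icc (0:ℝ) T, ∀ τ ∈ Set.Icc (0:ℝ) T, |p t - p τ| ≤ M * |t - τ|)
    (hint : ∀ s t : ℝ, IntervalIntegrable p volume s t) :
    ∀ s t : ℝ, 0 ≤ s → s < t → t ≤ T →
      |((t - s)⁻¹ * ∫ τ in s..t, p τ - p s) / (t - s)| ≤ M / 2 ∧
      |(p t - (t - s)⁻¹ * ∫ τ in s..t, p τ) / (t - s)| ≤ M / 2 :=
  stmt_2_general T M p hLip hint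
end

section
/- Suppose a particle with constant velocity v collides with the disk at time t from the right, the disk position is η(t) = ∫_0^t p, the particle never penetrates the disk (ω(τ) ≥ η(τ) for τ ∈ [0,t) where ω(τ) = η(t) - (t-τ)v), and v ≠ min_{s∈[0,t]} ⟨p⟩_{s,t}. Then min_{s∈[0,t]} ⟨p⟩_{s,t} < v < p(t) implies there exists s* ∈ [0,t) with v = ⟨p⟩_{s*,t} (i.e., v is attained as an average disk velocity), and conversely if the particle collided with the disk at some earlier time s then v = ⟨p⟩_{s,t}. In particular, the non-penetration condition fails whenever min ⟨p⟩ < v < p(t) and the particle is assumed never to have collided before. -/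
/-!
For `s < t` the average `⟨p⟩_{s,t}` is the slope of the primitive `η` between `s` and `t`, and
`η s - ω s = (t - s) (v - ⟨p⟩_{s,t})`. Hence a collision at time `s` forces `v = ⟨p⟩_{s,t}`,
and at a minimiser `s₀` of the average (which lies before `t` when `u < v < p t`) the particle is
already inside the disk. Since `η` is differentiable from the left at `t` with derivative `p t`,
the average is continuous on `[0, t]`, and the intermediate value theorem between `s₀` and `t`
produces the time `s` with `v = ⟨p⟩_{s,t}`.
-/

open MeasureTheory Set Filter Topology

theorem continuousOn_update_slope {f : ℝ → ℝ} {f' t : ℝ} {s : Set ℝ} (hf : ContinuousOn f s)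
    (hd : HasDerivWithinAt f f' s t) : ContinuousOn (Function.update (slope f t) t f') s := by
  intro x hx
  rcases eq_or_ne x t with rfl | hxt
  · exact continuousWithinAt_update_same.mpr (hasDerivWithinAt_iff_tendsto_slope.mp hd)
  · rw [continuousWithinAt_update_of_ne hxt]
    simp only [slope_fun_def_field]
    exact ((hf x hx).sub continuousWithinAt_const).div
      (continuousWithinAt_id.sub continuousWithinAt_const) (sub_ne_zero.mpr hxt)

section Primitive

variable {p : ℝ → ℝ} {a t : ℝ}

theorem hasDerivWithinAt_integral_Icc_right (hat : a < t) (hp : ContinuousOn p (Icc a t)) :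
    HasDerivWithinAt (fun x => ∫ τ in a..x, p τ) (p t) (Icc a t) t := by
  have hmeas : StronglyMeasurableAtFilter p (𝓝[≤] t) := by
    rw [← nhdsWithin_Icc_eq_nhdsLE hat]
    exact hp.stronglyMeasurableAtFilter_nhdsWithin measurableSet_Icc t
  have hcont : ContinuousWithinAt p (Iic t) t :=
    (continuousWithinAt_Icc_iff_Iic hat).mp (hp t (right_mem_Icc.mpr hat.le))
  exact (intervalIntegral.integral_hasDerivWithinAt_right
    (hp.intervalIntegrable_of_Icc hat.le) hmeas hcont).mono Icc_subset_Iic_self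

theorem continuousOn_update_slope_integral (hat : a < t) (hp : ContinuousOn p (Icc a t)) :
    ContinuousOn (Function.update (slope (fun x => ∫ τ in a..x, p τ) t) t (p t)) (Icc a t) := by
  refine continuousOn_update_slope ?_ (hasDerivWithinAt_integral_Icc_right hat hp)
  rw [← uIcc_of_le hat.le]
  exact intervalIntegral.continuousOn_primitive_interval (uIcc_of_le hat.le ▸ hp.integrableOn_Icc)

theorem inv_mul_integral_eq_slope {s : ℝ} (hp : ContinuousOn p (Icc a t)) (hs : s ∈ Icc a t) :
    (t - s)⁻¹ * ∫ τ in s..t, p τ = slope (fun x => ∫ τ in a..x, p τ) t s := by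
  rw [slope_comm, slope_def_field, div_eq_inv_mul, intervalIntegral.integral_interval_sub_left]
  · exact hp.intervalIntegrable_of_Icc (hs.1.trans hs.2)
  · exact (hp.mono (Icc_subset_Icc_right hs.2)).intervalIntegrable_of_Icc hs.1

end Primitive

/-- precollisional velocities. With `η t = ∫_0^t p`, the average velocity
`avg s = ⟨p⟩_{s,t}` (with `avg t = p t`), `u = min_{s∈[0,t]} ⟨p⟩_{s,t}`, and particle
trajectory `ω τ = η t - (t - τ) v`:
(i) if `u < v < p t` then `v = ⟨p⟩_{s,t}` for some `s ∈ [0,t)`;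
(ii) conversely, if the particle collided with the disk at some earlier time `s`
    (i.e. `ω s = η s`), then `v = ⟨p⟩_{s,t}`;
(iii) if `u < v < p t`, the non-penetration condition fails at some earlier time:
    `ω τ < η τ` for some `τ ∈ [0,t)`. -/
theorem stmt_3 (T t v : ℝ) (p : ℝ → ℝ) (hp : ContinuousOn p (Set.Icc 0 T))
    (ht : 0 < t) (htT : t ≤ T)
    (η : ℝ → ℝ) (hη : ∀ τ, η τ = ∫ x in (0:ℝ)..τ, p x)
    (avg : ℝ → ℝ)
    (havg : ∀ s, s ≠ t → avg s = (t - s)⁻¹ * ∫ τ in s..t, p τ)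
    (havgt : avg t = p t)
    (u : ℝ) (hu : IsLeast (avg '' Set.Icc 0 t) u)
    (ω : ℝ → ℝ) (hω : ∀ τ, ω τ = η t - (t - τ) * v) :
    (u < v → v < p t → ∃ s ∈ Set.Ico 0 t, v = avg s) ∧
    (∀ s ∈ Set.Ico 0 t, ω s = η s → v = avg s) ∧
    (u < v → v < p t → ∃ τ ∈ Set.Ico 0 t, ω τ < η τ) := by
  have hpt : ContinuousOn p (Icc 0 t) := hp.mono (Icc_subset_Icc_right htT)
  have hη' : η = fun τ => ∫ x in (0:ℝ)..τ, p x := funext hη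
  have havg_eq : EqOn avg (Function.update (slope η t) t (p t)) (Icc 0 t) := by
    intro s hs
    rcases eq_or_ne s t with rfl | hst
    · simp [havgt]
    · rw [Function.update_of_ne hst, havg s hst, hη', inv_mul_integral_eq_slope hpt hs]
  have havg_cont : ContinuousOn avg (Icc 0 t) :=
    (hη' ▸ continuousOn_update_slope_integral ht hpt).congr havg_eq
  have hgap : ∀ s ∈ Ico 0 t, η s - ω s = (t - s) * (v - avg s) := by
    intro s hs
    have hst : s - t ≠ 0 := sub_ne_zero.mpr hs.2.ne
    rw [havg_eq ⟨hs.1, hs.2.le⟩, Function.update_of_ne hs.2.ne, slope_def_field, hω]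
    field_simp
    ring
  obtain ⟨s₀, hs₀, rfl⟩ := hu.1
  have hs₀_lt : avg s₀ < v → v < p t → s₀ ∈ Ico 0 t := fun huv hvp =>
    ⟨hs₀.1, hs₀.2.lt_of_ne (by rintro rfl; linarith)⟩
  refine ⟨fun huv hvp => ?_, fun s hs hcol => ?_, fun huv hvp => ⟨s₀, hs₀_lt huv hvp, ?_⟩⟩
  · obtain ⟨s, hs, hsv⟩ := intermediate_value_Icc hs₀.2
      (havg_cont.mono (Icc_subset_Icc_left hs₀.1)) ⟨huv.le, havgt ▸ hvp.le⟩
    exact ⟨s, ⟨hs₀.1.trans hs.1, hs.2.lt_of_ne (by rintro rfl; linarith)⟩, hsv.symm⟩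
  · have h0 : (t - s) * (v - avg s) = 0 := by rw [← hgap s hs, hcol, sub_self]
    exact sub_eq_zero.mp ((mul_eq_zero.mp h0).resolve_left (sub_ne_zero.mpr hs.2.ne'))
  · have hs₀_mem := hs₀_lt huv hvp
    exact sub_pos.mp (hgap s₀ hs₀_mem ▸ mul_pos (sub_pos.mpr hs₀_mem.2) (sub_pos.mpr huv))
end

section
/- Let g : [0,t] → ℝ be continuous and ḡ(s) = min_{τ∈[s,t]} g(τ). If (a,b) is a maximal connected component of the open set {s ∈ [0,t) : g(s) > ḡ(s)}, then ḡ is constant on [a,b]: ḡ(a) = ḡ(s) = ḡ(b) for all s ∈ (a,b). -/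
/-!
The suffix minimum `ḡ` is monotone. For `s ∈ (a,b)` the minimum of `g` on `[s,t]` is attained at
some `τ`; it cannot be attained inside `(a,b)`, where `ḡ τ < g τ` and `ḡ s ≤ ḡ τ`, so `τ ≥ b` and
`ḡ s = ḡ b`. Hence `g ≥ ḡ b` on `(a,t]`, and by continuity also at `a`, which gives `ḡ a = ḡ b`.
-/

open Set

section SuffixMin

variable {α β : Type*} [LinearOrder α] [LinearOrder β] {g gbar : α → β} {a b t : α}

theorem monotoneOn_of_isLeast_image_Icc
    (hgbar : ∀ s ∈ Icc a t, IsLeast (g '' Icc s t) (gbar s)) : MonotoneOn gbar (Icc a t) :=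
  fun _ hx _ hy hxy => (hgbar _ hy).mono (hgbar _ hx) (image_mono (Icc_subset_Icc_left hxy))

theorem suffixMin_eq_of_lt_on_Ioo (hgbar : ∀ s ∈ Icc a t, IsLeast (g '' Icc s t) (gbar s))
    (hbt : b ≤ t) (hlt : ∀ τ ∈ Ioo a b, gbar τ < g τ) {s : α} (hs : s ∈ Ioo a b) :
    gbar s = gbar b := by
  have hsI : s ∈ Icc a t := ⟨hs.1.le, hs.2.le.trans hbt⟩
  have hbI : b ∈ Icc a t := ⟨hs.1.le.trans hs.2.le, hbt⟩
  refine le_antisymm (monotoneOn_of_isLeast_image_Icc hgbar hsI hbI hs.2.le) ?_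
  obtain ⟨τ, hτ, hgτ⟩ := (hgbar s hsI).1
  rcases le_or_gt b τ with hbτ | hτb
  · exact hgτ ▸ (hgbar b hbI).2 ⟨τ, ⟨hbτ, hτ.2⟩, rfl⟩
  · have hτab : τ ∈ Ioo a b := ⟨hs.1.trans_le hτ.1, hτb⟩
    have hsτ : gbar s ≤ gbar τ :=
      monotoneOn_of_isLeast_image_Icc hgbar hsI ⟨hτab.1.le, hτ.2⟩ hτ.1
    exact absurd (hgτ ▸ hlt τ hτab) hsτ.not_gt

theorem suffixMin_le_of_lt_on_Ioo (hgbar : ∀ s ∈ Icc a t, IsLeast (g '' Icc s t) (gbar s))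
    (hab : a ≤ b) (hbt : b ≤ t) (hlt : ∀ τ ∈ Ioo a b, gbar τ < g τ) {x : α} (hx : x ∈ Ioc a t) :
    gbar b ≤ g x := by
  rcases lt_or_ge x b with hxb | hbx
  · have hxab : x ∈ Ioo a b := ⟨hx.1, hxb⟩
    rw [← suffixMin_eq_of_lt_on_Ioo hgbar hbt hlt hxab]
    exact (hgbar x ⟨hx.1.le, hx.2⟩).2 ⟨x, ⟨le_rfl, hx.2⟩, rfl⟩
  · exact (hgbar b ⟨hab, hbt⟩).2 ⟨x, ⟨hbx, hx.2⟩, rfl⟩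

variable [TopologicalSpace α] [OrderTopology α] [DenselyOrdered α]
  [TopologicalSpace β] [OrderClosedTopology β]

theorem suffixMin_left_eq_of_lt_on_Ioo (hgbar : ∀ s ∈ Icc a t, IsLeast (g '' Icc s t) (gbar s))
    (hg : ContinuousWithinAt g (Ioo a b) a) (hab : a < b) (hbt : b ≤ t)
    (hlt : ∀ τ ∈ Ioo a b, gbar τ < g τ) : gbar a = gbar b := by
  have hlower : ∀ x ∈ Icc a t, gbar b ≤ g x := by
    intro x hx
    rcases hx.1.eq_or_lt with hax | hax
    · subst hax
      have ha_mem : a ∈ closure (Ioo a b) := by rw [closure_Ioo hab.ne]; exact ⟨le_rfl, hab.le⟩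
      exact ContinuousWithinAt.closure_le ha_mem continuousWithinAt_const hg fun y hy =>
        suffixMin_le_of_lt_on_Ioo hgbar hab.le hbt hlt ⟨hy.1, hy.2.le.trans hbt⟩
    · exact suffixMin_le_of_lt_on_Ioo hgbar hab.le hbt hlt ⟨hax, hx.2⟩
  have haI : a ∈ Icc a t := ⟨le_rfl, hab.le.trans hbt⟩
  refine le_antisymm (monotoneOn_of_isLeast_image_Icc hgbar haI ⟨hab.le, hbt⟩ hab.le) ?_
  obtain ⟨τ, hτ, hgτ⟩ := (hgbar a haI).1
  exact hgτ ▸ hlower τ hτ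

end SuffixMin

theorem stmt_6_general (t : ℝ) (g : ℝ → ℝ)
    (hg : ContinuousOn g (Set.Icc 0 t))
    (gbar : ℝ → ℝ) (hgbar : ∀ s ∈ Set.Icc (0:ℝ) t, IsLeast (g '' Set.Icc s t) (gbar s))
    (a b : ℝ) (hab : a < b) (ha : a ∈ Set.Icc 0 t) (hb : b ∈ Set.Icc 0 t)
    (hcomp : ∀ s ∈ Set.Ioo a b, gbar s < g s) :
    ∀ s ∈ Set.Ioo a b, gbar a = gbar s ∧ gbar s = gbar b := by
  have hgbar' : ∀ s ∈ Icc a t, IsLeast (g '' Icc s t) (gbar s) :=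
    fun s hs => hgbar s ⟨ha.1.trans hs.1, hs.2⟩
  have hg' : ContinuousWithinAt g (Ioo a b) a :=
    (hg a ha).mono fun s hs => ⟨ha.1.trans hs.1.le, hs.2.le.trans hb.2⟩
  intro s hs
  have hsb := suffixMin_eq_of_lt_on_Ioo hgbar' hb.2 hcomp hs
  exact ⟨(suffixMin_left_eq_of_lt_on_Ioo hgbar' hg' hab hb.2 hcomp).trans hsb.symm, hsb⟩

/-- if `(a,b)` is a maximal connected component of the open set
`{s ∈ [0,t) : g s > ḡ s}` (so `g a = ḡ a` and `g b = ḡ b`), then `ḡ` is constant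
on `[a,b]`: `ḡ a = ḡ s = ḡ b` for all `s ∈ (a,b)`. -/
theorem stmt_6 (t : ℝ) (ht : 0 < t) (g : ℝ → ℝ)
    (hg : ContinuousOn g (Set.Icc 0 t))
    (gbar : ℝ → ℝ) (hgbar : ∀ s ∈ Set.Icc (0:ℝ) t, IsLeast (g '' Set.Icc s t) (gbar s))
    (a b : ℝ) (hab : a < b) (ha : a ∈ Set.Icc 0 t) (hb : b ∈ Set.Icc 0 t)
    (hcomp : ∀ s ∈ Set.Ioo a b, gbar s < g s)
    (hga : g a = gbar a) (hgb : g b = gbar b) :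
    ∀ s ∈ Set.Ioo a b, gbar a = gbar s ∧ gbar s = gbar b :=
  stmt_6_general t g hg gbar hgbar a b hab ha hb hcomp
end

section
/- Let p : [0,T] → ℝ be Lipschitz with constant M, v(s,t) the average of p over [s,t] (with v(t,t) = p(t)), and v̄(s,t) = min_{τ∈[s,t]} v(τ,t). Then for each fixed s, the map t ↦ v̄(s,t) is Lipschitz in t on (s,T] with Lipschitz constant at most M. -/
/-!
For `t < t'` and `τ ≤ t`, the average over `[τ, t']` is the convex combination of the averages
over `[τ, t]` and `[t, t']` with weights proportional to the lengths. As `p` is `M`-Lipschitz,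
both averages lie within `M` times the interval length of `p t`, so moving the right end point
from `t` to `t'` changes every `v τ ·` by at most `M (t' - t)`. The new candidates `τ ∈ (t, t']`
for the minimum at `t'` cannot undercut `v̄(s,t) ≤ v(t,t) = p t` by more than `M (t' - t)`,
since `v(τ,t')` averages `p` over points within `t' - t` of `t`.
-/

open MeasureTheory Set

theorem IsLeast.le_add_of_forall_exists {α β γ : Type*} [Add γ] [Preorder γ]
    {f : α → γ} {g : β → γ} {A : Set α} {B : Set β} {a b ε : γ}
    (ha : IsLeast (f '' A) a) (hb : IsLeast (g '' B) b)
    (h : ∀ x ∈ A, ∃ y ∈ B, g y ≤ f x + ε) : b ≤ a + ε := by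
  obtain ⟨x, hx, rfl⟩ := ha.1
  obtain ⟨y, hy, hyx⟩ := h x hx
  exact (hb.2 (mem_image_of_mem g hy)).trans hyx

theorem abs_inv_mul_integral_sub_le {p : ℝ → ℝ} {a b c L : ℝ} (hab : a < b)
    (hp : IntervalIntegrable p volume a b) (h : ∀ x ∈ Ioc a b, |p x - c| ≤ L) :
    |(b - a)⁻¹ * (∫ x in a..b, p x) - c| ≤ L := by
  have hba : 0 < b - a := sub_pos.2 hab
  have hsub : (b - a)⁻¹ * (∫ x in a..b, p x) - c = (b - a)⁻¹ * ∫ x in a..b, (p x - c) := by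
    rw [intervalIntegral.integral_sub hp intervalIntegrable_const,
      intervalIntegral.integral_const, smul_eq_mul]
    field_simp
  have hint := intervalIntegral.norm_integral_le_of_norm_le_const (f := fun x => p x - c)
    fun x hx => (h x (uIoc_of_le hab.le ▸ hx)).trans_eq' (Real.norm_eq_abs _)
  rw [Real.norm_eq_abs, abs_of_pos hba] at hint
  rw [hsub, abs_mul, abs_inv, abs_of_pos hba, inv_mul_le_iff₀ hba, mul_comm]
  exact hint

section RunningAverage

variable {p : ℝ → ℝ} {v : ℝ → ℝ → ℝ}

theorem average_sub_average_eq
    (hv : ∀ s t : ℝ, s < t → v s t = (t - s)⁻¹ * ∫ τ in s..t, p τ)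
    {τ t t' : ℝ} (hτt : τ ≤ t) (htt' : t < t')
    (h₁ : IntervalIntegrable p volume τ t) (h₂ : IntervalIntegrable p volume t t') :
    v τ t' - v τ t = (t' - t) / (t' - τ) * (v t t' - v τ t) := by
  rcases hτt.eq_or_lt with rfl | hτt
  · rw [div_self (sub_pos.2 htt').ne', one_mul]
  have h₁₂ := intervalIntegral.integral_add_adjacent_intervals h₁ h₂
  rw [hv τ t' (hτt.trans htt'), hv τ t hτt, hv t t' htt', ← h₁₂]
  have : t' - τ ≠ 0 := by linarith
  have : t - τ ≠ 0 := by linarith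
  have : t' - t ≠ 0 := by linarith
  field_simp
  ring

theorem abs_average_sub_le
    (hv : ∀ s t : ℝ, s < t → v s t = (t - s)⁻¹ * ∫ τ in s..t, p τ) (hvd : ∀ t : ℝ, v t t = p t)
    {K : NNReal} {S : Set ℝ} (hp : LipschitzOnWith K p S) {a b c L : ℝ} (hab : a ≤ b)
    (hS : Icc a b ⊆ S) (hc : c ∈ S) (hL : Icc a b ⊆ Icc (c - L) (c + L)) :
    |v a b - p c| ≤ K * L := by
  have hpc : ∀ x ∈ Icc a b, |p x - p c| ≤ K * L := fun x hx => by
    have hxc : |x - c| ≤ L := abs_sub_le_iff.2 ⟨by linarith [(hL hx).2], by linarith [(hL hx).1]⟩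
    calc |p x - p c| = dist (p x) (p c) := rfl
      _ ≤ K * dist x c := hp.dist_le_mul x (hS hx) c hc
      _ ≤ K * L := mul_le_mul_of_nonneg_left hxc K.2
  rcases hab.eq_or_lt with rfl | hab
  · rw [hvd]
    exact hpc a ⟨le_rfl, le_rfl⟩
  rw [hv a b hab]
  refine abs_inv_mul_integral_sub_le hab ?_ fun x hx => hpc x (Ioc_subset_Icc_self hx)
  exact (hp.continuousOn.mono (uIcc_of_le hab.le ▸ hS)).intervalIntegrable

theorem abs_average_sub_average_le
    (hv : ∀ s t : ℝ, s < t → v s t = (t - s)⁻¹ * ∫ τ in s..t, p τ) (hvd : ∀ t : ℝ, v t t = p t)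
    {K : NNReal} {τ t t' : ℝ} (hp : LipschitzOnWith K p (Icc τ t')) (hτt : τ ≤ t)
    (htt' : t ≤ t') :
    |v τ t' - v τ t| ≤ K * (t' - t) := by
  rcases htt'.eq_or_lt with rfl | htt'
  · simp
  have hτt' : Icc τ t ⊆ Icc τ t' := Icc_subset_Icc_right htt'.le
  have htt't : Icc t t' ⊆ Icc τ t' := Icc_subset_Icc_left hτt
  have ht : t ∈ Icc τ t' := ⟨hτt, htt'.le⟩
  have h₁ : |v τ t - p t| ≤ K * (t - τ) :=
    abs_average_sub_le hv hvd hp hτt hτt' ht (Icc_subset_Icc (by linarith) (by linarith))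
  have h₂ : |v t t' - p t| ≤ K * (t' - t) :=
    abs_average_sub_le hv hvd hp htt'.le htt't ht (Icc_subset_Icc (by linarith) (by linarith))
  have hpos : 0 < t' - τ := by linarith
  have hcont := hp.continuousOn
  rw [average_sub_average_eq hv hτt htt'
      ((hcont.mono (uIcc_of_le hτt ▸ hτt')).intervalIntegrable)
      ((hcont.mono (uIcc_of_le htt'.le ▸ htt't)).intervalIntegrable),
    abs_mul, abs_of_nonneg (div_nonneg (by linarith) hpos.le)]
  calc (t' - t) / (t' - τ) * |v t t' - v τ t|
      ≤ (t' - t) / (t' - τ) * (K * (t' - t) + K * (t - τ)) :=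
        mul_le_mul_of_nonneg_left ((abs_sub_le _ _ _).trans (by rw [abs_sub_comm] at h₁; linarith))
          (div_nonneg (by linarith) hpos.le)
    _ = K * (t' - t) := by field_simp; ring

end RunningAverage

theorem stmt_9_general (T M : ℝ) (p : ℝ → ℝ)
    (hLip : ∀ t ∈ Set.Icc (0:ℝ) T, ∀ τ ∈ Set.Icc (0:ℝ) T, |p t - p τ| ≤ M * |t - τ|)
    (v : ℝ → ℝ → ℝ)
    (hv : ∀ s t : ℝ, s < t → v s t = (t - s)⁻¹ * ∫ τ in s..t, p τ)
    (hvd : ∀ t : ℝ, v t t = p t)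
    (vbar : ℝ → ℝ → ℝ)
    (hvbar : ∀ s t : ℝ, 0 ≤ s → s ≤ t → t ≤ T →
      IsLeast ((fun τ => v τ t) '' Set.Icc s t) (vbar s t)) :
    ∀ s ∈ Set.Icc (0:ℝ) T, ∀ t ∈ Set.Ioc s T, ∀ t' ∈ Set.Ioc s T,
      |vbar s t - vbar s t'| ≤ M * |t - t'| := by
  intro s hs t ht t' ht'
  wlog htt' : t ≤ t' generalizing t t'
  · rw [abs_sub_comm, abs_sub_comm t]
    exact this t' ht' t ht (le_of_not_ge htt')
  have hsT : Icc s T ⊆ Icc 0 T := Icc_subset_Icc_left hs.1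
  have ht0 : t ∈ Icc 0 T := hsT ⟨ht.1.le, ht.2⟩
  have hM : 0 ≤ M := nonneg_of_mul_nonneg_left ((abs_nonneg _).trans (hLip s hs t ht0))
    (abs_pos.2 (sub_ne_zero.2 ht.1.ne))
  have hp : LipschitzOnWith ⟨M, hM⟩ p (Icc 0 T) :=
    .of_dist_le_mul fun x hx y hy => by
      rw [Real.dist_eq, Real.dist_eq]
      exact hLip x hx y hy
  have hmove : ∀ τ ∈ Icc s t, |v τ t' - v τ t| ≤ M * (t' - t) := fun τ hτ =>
    abs_average_sub_average_le hv hvd (hp.mono (Icc_subset_Icc (hs.1.trans hτ.1) ht'.2)) hτ.2 htt'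
  have hvbar_t := hvbar s t hs.1 ht.1.le ht.2
  have hvbar_t' := hvbar s t' hs.1 ht'.1.le ht'.2
  have hup : vbar s t' ≤ vbar s t + M * (t' - t) :=
    hvbar_t.le_add_of_forall_exists hvbar_t' fun τ hτ =>
      ⟨τ, ⟨hτ.1, hτ.2.trans htt'⟩, by linarith [(abs_le.1 (hmove τ hτ)).2]⟩
  have hdown : vbar s t ≤ vbar s t' + M * (t' - t) := by
    refine hvbar_t'.le_add_of_forall_exists hvbar_t fun τ hτ => ?_
    rcases le_or_gt τ t with hτt | htτ
    · exact ⟨τ, ⟨hτ.1, hτt⟩, by linarith [(abs_le.1 (hmove τ ⟨hτ.1, hτt⟩)).1]⟩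
    · have : |v τ t' - p t| ≤ M * (t' - t) := abs_average_sub_le hv hvd hp hτ.2
        (Icc_subset_Icc (hs.1.trans hτ.1) ht'.2) ht0 (Icc_subset_Icc (by linarith) (by linarith))
      exact ⟨t, ⟨ht.1.le, le_rfl⟩, by linarith [hvd t, (abs_le.1 this).1]⟩
  rw [abs_sub_comm t, abs_of_nonneg (sub_nonneg.2 htt')]
  exact abs_sub_le_iff.2 ⟨by linarith, by linarith⟩

/-- with `v(s,t)` the average of a Lipschitz `p` over `[s,t]`
(`v(t,t) = p t`) and `v̄(s,t) = min_{τ∈[s,t]} v(τ,t)`, for fixed `s` the map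
`t ↦ v̄(s,t)` is Lipschitz with constant `M` on `(s,T]`. -/
theorem stmt_9 (T M : ℝ) (hT : 0 < T) (p : ℝ → ℝ)
    (hbd : ∀ τ ∈ Set.Icc (0:ℝ) T, |p τ| ≤ M)
    (hLip : ∀ t ∈ Set.Icc (0:ℝ) T, ∀ τ ∈ Set.Icc (0:ℝ) T, |p t - p τ| ≤ M * |t - τ|)
    (v : ℝ → ℝ → ℝ)
    (hv : ∀ s t : ℝ, s < t → v s t = (t - s)⁻¹ * ∫ τ in s..t, p τ)
    (hvd : ∀ t : ℝ, v t t = p t)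
    (vbar : ℝ → ℝ → ℝ)
    (hvbar : ∀ s t : ℝ, 0 ≤ s → s ≤ t → t ≤ T →
      IsLeast ((fun τ => v τ t) '' Set.Icc s t) (vbar s t)) :
    ∀ s ∈ Set.Icc (0:ℝ) T, ∀ t ∈ Set.Ioc s T, ∀ t' ∈ Set.Ioc s T,
      |vbar s t - vbar s t'| ≤ M * |t - t'| :=
  stmt_9_general T M p hLip v hv hvd vbar hvbar
end

section
/- Let h : [0,t] → ℝ be monotone nondecreasing and Lipschitz, and let Φ = {s ∈ [0,t] : h'(s) exists and h'(s) > 0}. Then h restricted to Φ is injective (strictly increasing), and the image h([0,t] \ Φ) has Lebesgue measure zero; consequently h(Φ) has full measure in the interval [h(0), h(t)]. -/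
/-!
Since `h` is monotone, its derivative is nonnegative wherever it exists, so off `Φ` either
`h' = 0` or `h` is not differentiable. The image of the first set is null by the
one-dimensional Sard lemma; the second set is null by Rademacher's theorem, and a Lipschitz map
sends null sets to null sets. On `Φ`, `h` cannot take the same value at `x < y`: it would be
constant on `[x, y]`, forcing `h'(x) = 0`. Finally `h` maps `[0, t]` onto `[h 0, h t]`, so the
part of that interval missed by `h(Φ)` lies in `h([0, t] \ Φ)`.
-/

open MeasureTheory Set

/-- The set `Φ`, with the derivative taken within `s`. -/
def posDerivSet (f : ℝ → ℝ) (s : Set ℝ) : Set ℝ :=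
  {x ∈ s | ∃ d, 0 < d ∧ HasDerivWithinAt f d s x}

theorem MonotoneOn.strictMonoOn_posDerivSet {f : ℝ → ℝ} {s : Set ℝ} (hf : MonotoneOn f s)
    (hs : s.OrdConnected) : StrictMonoOn f (posDerivSet f s) := by
  rintro x ⟨hxs, d, hd, hfd⟩ y ⟨hys, -⟩ hxy
  refine (hf hxs hys hxy.le).lt_of_ne fun hfxy => hd.ne' ?_
  have hIcc : Icc x y ⊆ s := hs.out hxs hys
  have hconst : EqOn f (fun _ => f x) (Icc x y) := fun z hz =>
    le_antisymm (hfxy ▸ hf (hIcc hz) hys hz.2) (hf hxs (hIcc hz) hz.1)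
  have hzero : HasDerivWithinAt f 0 (Icc x y) x :=
    (hasDerivWithinAt_const x _ (f x)).congr hconst rfl
  exact (uniqueDiffOn_Icc hxy x (left_mem_Icc.2 hxy.le)).eq_deriv _ (hfd.mono hIcc) hzero

theorem volume_image_eq_zero_of_hasDerivWithinAt_zero {f : ℝ → ℝ} {s : Set ℝ}
    (hf : ∀ x ∈ s, HasDerivWithinAt f 0 s x) : volume (f '' s) = 0 :=
  addHaar_image_eq_zero_of_det_fderivWithin_eq_zero volume (f' := fun _ => 0)
    (fun x hx => by simpa using (hf x hx).hasFDerivWithinAt) fun _ _ => by simp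

theorem LipschitzOnWith.volume_image_eq_zero {K : NNReal} {f : ℝ → ℝ} {s : Set ℝ}
    (hf : LipschitzOnWith K f s) (hs : volume s = 0) : volume (f '' s) = 0 := by
  have := hf.hausdorffMeasure_image_le zero_le_one
  rw [hausdorffMeasure_real, hs, mul_zero] at this
  exact nonpos_iff_eq_zero.1 this

theorem LipschitzOnWith.volume_image_not_differentiableWithinAt_eq_zero {K : NNReal} {f : ℝ → ℝ}
    {s : Set ℝ} (hf : LipschitzOnWith K f s) :
    volume (f '' {x ∈ s | ¬DifferentiableWithinAt ℝ f s x}) = 0 := by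
  refine (hf.mono fun x hx => hx.1).volume_image_eq_zero ?_
  simpa only [Classical.not_imp] using ae_iff.1 hf.ae_differentiableWithinAt_of_mem_real

theorem MonotoneOn.volume_image_diff_posDerivSet_eq_zero {K : NNReal} {f : ℝ → ℝ} {s : Set ℝ}
    (hmono : MonotoneOn f s) (hLip : LipschitzOnWith K f s) (hs : Preperfect s) :
    volume (f '' (s \ posDerivSet f s)) = 0 := by
  have hcover : s \ posDerivSet f s ⊆
      {x ∈ s | HasDerivWithinAt f 0 s x} ∪ {x ∈ s | ¬DifferentiableWithinAt ℝ f s x} := by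
    rintro x ⟨hx, hxΦ⟩
    by_cases hdiff : DifferentiableWithinAt ℝ f s x
    · refine Or.inl ⟨hx, ?_⟩
      have hnonneg := hdiff.hasDerivWithinAt.nonneg_of_monotoneOn (hs x hx) hmono
      obtain hpos | hzero := hnonneg.lt_or_eq
      · exact absurd ⟨hx, _, hpos, hdiff.hasDerivWithinAt⟩ hxΦ
      · exact hzero ▸ hdiff.hasDerivWithinAt
    · exact Or.inr ⟨hx, hdiff⟩
  refine measure_mono_null (image_mono hcover) ?_
  rw [image_union]
  refine measure_union_null (volume_image_eq_zero_of_hasDerivWithinAt_zero fun x hx => ?_)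
    hLip.volume_image_not_differentiableWithinAt_eq_zero
  exact hx.2.mono fun y hy => hy.1

/-- for `h` nondecreasing and Lipschitz on `[0,t]` and
`Φ = {s ∈ [0,t] : h'(s) exists (within [0,t]) and h'(s) > 0}`, the restriction of
`h` to `Φ` is strictly increasing (hence injective), the image of the complement
`[0,t] \ Φ` is Lebesgue null, and `h '' Φ` has full measure in `[h 0, h t]`. -/
theorem stmt_12 (t : ℝ) (ht : 0 < t) (K : NNReal) (h : ℝ → ℝ)
    (hmono : MonotoneOn h (Set.Icc 0 t))
    (hLip : LipschitzOnWith K h (Set.Icc 0 t)) :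
    StrictMonoOn h {s ∈ Set.Icc (0:ℝ) t |
        ∃ d, 0 < d ∧ HasDerivWithinAt h d (Set.Icc 0 t) s} ∧
    Set.InjOn h {s ∈ Set.Icc (0:ℝ) t |
        ∃ d, 0 < d ∧ HasDerivWithinAt h d (Set.Icc 0 t) s} ∧
    volume (h '' (Set.Icc 0 t \ {s ∈ Set.Icc (0:ℝ) t |
        ∃ d, 0 < d ∧ HasDerivWithinAt h d (Set.Icc 0 t) s})) = 0 ∧
    volume (Set.Icc (h 0) (h t) \ h '' {s ∈ Set.Icc (0:ℝ) t |
        ∃ d, 0 < d ∧ HasDerivWithinAt h d (Set.Icc 0 t) s}) = 0 := by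
  change StrictMonoOn h (posDerivSet h (Icc 0 t)) ∧ InjOn h (posDerivSet h (Icc 0 t)) ∧
    volume (h '' (Icc 0 t \ posDerivSet h (Icc 0 t))) = 0 ∧
    volume (Icc (h 0) (h t) \ h '' posDerivSet h (Icc 0 t)) = 0
  have hstrict := hmono.strictMonoOn_posDerivSet ordConnected_Icc
  have hperfect : Preperfect (Icc 0 t) := isPreconnected_Icc.preperfect_of_nontrivial
    ⟨0, left_mem_Icc.2 ht.le, t, right_mem_Icc.2 ht.le, ht.ne⟩
  have hnull := hmono.volume_image_diff_posDerivSet_eq_zero hLip hperfect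
  have hsurj : Icc (h 0) (h t) ⊆ h '' Icc 0 t := intermediate_value_Icc ht.le hLip.continuousOn
  refine ⟨hstrict, hstrict.injOn, hnull, measure_mono_null ?_ hnull⟩
  rw [sdiff_subset_iff, ← image_union, union_sdiff_self]
  exact hsurj.trans (image_mono subset_union_right)
end
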